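/- arXiv:2208.02045 — 3 statements merged into one kernel-verified Lean document; each statement's English description precedes it below -/
import Mathlib

section
/- Let H₁ and H₂ be graphs with at least one edge, and let p₁, p₂ ∈ (0,1) with p₁ + p₂ = 1. If both H₁ and H₂ are Sidorenko (i.e., t(Hᵢ, W) ≥ t(K₂, W)^{e(Hᵢ)} for every graphon W), then for all graphons W₁, W₂ with W₁ + W₂ = 1, we have t(H₁,W₁)/(e(H₁)·p₁^{e(H₁)-1}) + t(H₂,W₂)/(e(H₂)·p₂^{e(H₂)-1}) ≥ p₁/e(H₁) + p₂/e(H₂). -/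
open MeasureTheory Finset

/-- The uniform measure on the unit interval `[0,1]`, as a measure on `ℝ`. -/
noncomputable def unitM : Measure ℝ := volume.restrict (Set.Icc 0 1)

instance : SigmaFinite unitM := by unfold unitM; infer_instance

/-- Value of a symmetric two-variable function on an unordered pair of vertices. -/
noncomputable def symEdge {α : Type*} (W : ℝ → ℝ → ℝ) (x : α → ℝ) : Sym2 α → ℝ :=
  Sym2.lift ⟨fun u v => (W (x u) (x v) + W (x v) (x u)) / 2, fun u v => by ring⟩

open Classical in
/-- Homomorphism density of a finite simple graph in a kernel. -/
noncomputable def homDensity {V : Type*} [Fintype V] (G : SimpleGraph V)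
    (W : ℝ → ℝ → ℝ) : ℝ :=
  ∫ x : V → ℝ, ∏ e ∈ G.edgeFinset, symEdge W x e ∂(Measure.pi fun _ => unitM)

/-- Number of edges of a graph. -/
noncomputable def eCount {V : Type*} (G : SimpleGraph V) : ℕ := G.edgeSet.ncard

def IsSymm2 (W : ℝ → ℝ → ℝ) : Prop := ∀ x y, W x y = W y x

/-- A kernel: bounded, symmetric, measurable. -/
def IsKernel (W : ℝ → ℝ → ℝ) : Prop :=
  Measurable (Function.uncurry W) ∧ IsSymm2 W ∧ ∃ C, ∀ x y, |W x y| ≤ C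

/-- A graphon: symmetric measurable with values in `[0,1]`. -/
def IsGraphon (W : ℝ → ℝ → ℝ) : Prop :=
  Measurable (Function.uncurry W) ∧ IsSymm2 W ∧ ∀ x y, W x y ∈ Set.Icc (0:ℝ) 1

/-- The pair `(G₁, G₂)` is `(p₁,p₂)`-common. -/
def IsCommonPair {V₁ V₂ : Type*} [Fintype V₁] [Fintype V₂]
    (G₁ : SimpleGraph V₁) (G₂ : SimpleGraph V₂) (p₁ p₂ : ℝ) : Prop :=
  ∀ W₁ W₂ : ℝ → ℝ → ℝ, IsGraphon W₁ → IsGraphon W₂ → (∀ x y, W₁ x y + W₂ x y = 1) →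
    homDensity G₁ W₁ / (eCount G₁ * p₁ ^ (eCount G₁ - 1))
      + homDensity G₂ W₂ / (eCount G₂ * p₂ ^ (eCount G₂ - 1))
      ≥ p₁ / eCount G₁ + p₂ / eCount G₂

/-- The edge density `t(K₂, W)` of a kernel. -/
noncomputable def edgeDensity2 (W : ℝ → ℝ → ℝ) : ℝ :=
  ∫ x, ∫ y, W x y ∂unitM ∂unitM

/-- A graph is Sidorenko if `t(H,W) ≥ t(K₂,W)^{e(H)}` for every graphon `W`. -/
def IsSidorenko {V : Type*} [Fintype V] (G : SimpleGraph V) : Prop :=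
  ∀ W : ℝ → ℝ → ℝ, IsGraphon W → homDensity G W ≥ edgeDensity2 W ^ eCount G

/-!
By Bernoulli's inequality `x ^ m` lies above its tangent line at `p > 0`, so for a Sidorenko
graph `H` with `m ≥ 1` edges and `t = t(K₂, W)`,
`t(H, W) / (m p^(m-1)) ≥ t^m / (m p^(m-1)) ≥ p / m + (t - p)`.
Adding this for `(H₁, W₁, p₁)` and `(H₂, W₂, p₂)`, the error terms cancel because
`t(K₂, W₁) + t(K₂, W₂) = 1 = p₁ + p₂`.
-/

lemma pow_add_mul_sub_le_pow {x p : ℝ} (hx : 0 ≤ x) (hp : 0 < p) (m : ℕ) :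
    p ^ m + m * p ^ (m - 1) * (x - p) ≤ x ^ m := by
  cases m with
  | zero => simp
  | succ k =>
    have hbern := one_add_mul_le_pow (a := x / p - 1) (by linarith [div_nonneg hx hp.le]) (k + 1)
    calc p ^ (k + 1) + ↑(k + 1) * p ^ (k + 1 - 1) * (x - p)
        = (1 + ↑(k + 1) * (x / p - 1)) * p ^ (k + 1) := by
          rw [Nat.add_sub_cancel, pow_succ]
          field_simp
      _ ≤ (1 + (x / p - 1)) ^ (k + 1) * p ^ (k + 1) :=
          mul_le_mul_of_nonneg_right hbern (by positivity)
      _ = x ^ (k + 1) := by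
          rw [← mul_pow]
          field_simp
          ring

instance : IsProbabilityMeasure unitM :=
  ⟨by simp [unitM]⟩

lemma IsGraphon.isKernel {W : ℝ → ℝ → ℝ} (hW : IsGraphon W) : IsKernel W :=
  ⟨hW.1, hW.2.1, 1, fun x y => abs_le.2 ⟨by linarith [(hW.2.2 x y).1], (hW.2.2 x y).2⟩⟩

lemma IsKernel.integrable_uncurry {W : ℝ → ℝ → ℝ} (hW : IsKernel W) :
    Integrable (Function.uncurry W) (unitM.prod unitM) := by
  obtain ⟨hmeas, -, C, hC⟩ := hW
  exact Integrable.of_bound hmeas.aestronglyMeasurable C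
    (ae_of_all _ fun z => (Real.norm_eq_abs _).trans_le (hC z.1 z.2))

lemma IsKernel.edgeDensity2_eq_integral_prod {W : ℝ → ℝ → ℝ} (hW : IsKernel W) :
    edgeDensity2 W = ∫ z, Function.uncurry W z ∂(unitM.prod unitM) :=
  (integral_prod _ hW.integrable_uncurry).symm

lemma edgeDensity2_add_of_add_eq_one {W₁ W₂ : ℝ → ℝ → ℝ} (h₁ : IsKernel W₁) (h₂ : IsKernel W₂)
    (hc : ∀ x y, W₁ x y + W₂ x y = 1) :
    edgeDensity2 W₁ + edgeDensity2 W₂ = 1 := by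
  rw [h₁.edgeDensity2_eq_integral_prod, h₂.edgeDensity2_eq_integral_prod,
    ← integral_add h₁.integrable_uncurry h₂.integrable_uncurry]
  simp [Function.uncurry, hc]

lemma edgeDensity2_nonneg {W : ℝ → ℝ → ℝ} (hW : ∀ x y, 0 ≤ W x y) : 0 ≤ edgeDensity2 W :=
  integral_nonneg fun x => integral_nonneg fun y => hW x y

lemma IsSidorenko.add_sub_le_homDensity_div {V : Type*} [Fintype V] {G : SimpleGraph V}
    (hG : IsSidorenko G) (hm : 1 ≤ eCount G) {p : ℝ} (hp : 0 < p) {W : ℝ → ℝ → ℝ}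
    (hW : IsGraphon W) :
    p / eCount G + (edgeDensity2 W - p) ≤ homDensity G W / (eCount G * p ^ (eCount G - 1)) := by
  set m := eCount G
  have hm_pos : (0 : ℝ) < m := by exact_mod_cast hm
  rw [le_div_iff₀ (by positivity)]
  calc (p / m + (edgeDensity2 W - p)) * (m * p ^ (m - 1))
      = p ^ m + m * p ^ (m - 1) * (edgeDensity2 W - p) := by
        rw [← mul_pow_sub_one (show m ≠ 0 by omega) p]
        field_simp
    _ ≤ edgeDensity2 W ^ m :=
        pow_add_mul_sub_le_pow (edgeDensity2_nonneg fun x y => (hW.2.2 x y).1) hp m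
    _ ≤ homDensity G W := hG W hW

/-- If `H₁` and `H₂` are Sidorenko graphs with at least one edge, then `(H₁, H₂)`
is `(p₁, p₂)`-common for all `p₁, p₂ ∈ (0,1)` with `p₁ + p₂ = 1`. -/
theorem sidorenko_pair_common {V₁ V₂ : Type*} [Fintype V₁] [Fintype V₂]
    (G₁ : SimpleGraph V₁) (G₂ : SimpleGraph V₂)
    (h₁ : 1 ≤ eCount G₁) (h₂ : 1 ≤ eCount G₂)
    (p₁ p₂ : ℝ) (hp₁ : p₁ ∈ Set.Ioo (0:ℝ) 1) (hp₂ : p₂ ∈ Set.Ioo (0:ℝ) 1)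
    (hsum : p₁ + p₂ = 1)
    (hs₁ : IsSidorenko G₁) (hs₂ : IsSidorenko G₂) :
    IsCommonPair G₁ G₂ p₁ p₂ := by
  intro W₁ W₂ hW₁ hW₂ hc
  have hdensity_sum := edgeDensity2_add_of_add_eq_one hW₁.isKernel hW₂.isKernel hc
  linarith [hs₁.add_sub_le_homDensity_div h₁ hp₁.1 hW₁,
    hs₂.add_sub_le_homDensity_div h₂ hp₂.1 hW₂]
end

section
/- Let p₁, p₂ ∈ (0,1) with p₁ + p₂ = 1, let H be a nonempty graph, and let F₁,…,F_s be nonempty graphs all with exactly k edges. If (Fᵢ, H) is (p₁,p₂)-common for each 1 ≤ i ≤ s, then (F, H) is (p₁,p₂)-common, where F is the disjoint union of F₁,…,F_s. -/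
/-!
Write `X_G(W) = t(G,W) / (e p^(e-1)) - p / e = (p / e) (t(G,W) / p^e - 1)` for a graph `G`
with `e` edges. Commonness of `(G, H)` says `X_G(W₁) ≥ -c`, where `c = X_H(W₂)` does not
depend on `G`. For the `Fᵢ` this reads `t(Fᵢ,W₁) / p₁^k ≥ 1 - k c / p₁`; multiplying these
`s` inequalities between nonnegative numbers, using `t(F,W₁) = ∏ t(Fᵢ,W₁)` and Bernoulli's
inequality, gives `t(F,W₁) / p₁^(s k) ≥ 1 - s k c / p₁`, which is commonness of `(F, H)`.
-/

open MeasureTheory Finset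

/-- The disjoint union of the graphs `F 0, …, F (s-1)` (all on vertex type `V`),
realized on the vertex type `V × Fin s`. -/
def unionGraph {V : Type*} {s : ℕ} (F : Fin s → SimpleGraph V) :
    SimpleGraph (V × Fin s) where
  Adj a b := a.2 = b.2 ∧ (F a.2).Adj a.1 b.1
  symm := by
    constructor
    rintro ⟨u, i⟩ ⟨v, j⟩ ⟨h, hadj⟩
    cases h
    exact ⟨rfl, hadj.symm⟩
  loopless := by
    constructor
    rintro ⟨u, i⟩ ⟨-, h⟩
    exact (F i).irrefl h

theorem Finset.one_add_card_mul_le_prod {ι : Type*} (s : Finset ι) {x : ι → ℝ} {d : ℝ}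
    (hx : ∀ i ∈ s, 0 ≤ x i) (hd : ∀ i ∈ s, 1 + d ≤ x i) :
    1 + #s * d ≤ ∏ i ∈ s, x i := by
  rcases le_or_gt (-1) d with hd₁ | hd₁
  · calc 1 + #s * d ≤ (1 + d) ^ #s := one_add_mul_le_pow (by linarith) _
      _ = ∏ _i ∈ s, (1 + d) := (prod_const _).symm
      _ ≤ ∏ i ∈ s, x i := prod_le_prod (fun _ _ => by linarith) hd
  · rcases s.eq_empty_or_nonempty with rfl | hs
    · simp
    have hcard : (1 : ℝ) ≤ #s := by exact_mod_cast hs.card_pos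
    nlinarith [prod_nonneg hx]

theorem div_add_le_div_mul_pow_pred_iff {e : ℕ} (he : e ≠ 0) {t : ℝ} (ht : 0 < t) (a c : ℝ) :
    t / e + c ≤ a / (e * t ^ (e - 1)) ↔ 1 + e * c / t ≤ a / t ^ e := by
  obtain ⟨n, rfl⟩ := Nat.exists_eq_add_one_of_ne_zero he
  have h₁ : (t / ↑(n + 1) + c) * (↑(n + 1) * t ^ n) = t ^ n * (t + ↑(n + 1) * c) := by
    field_simp
  have h₂ : (1 + ↑(n + 1) * c / t) * t ^ (n + 1) = t ^ n * (t + ↑(n + 1) * c) := by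
    field_simp
    ring
  rw [Nat.add_sub_cancel, le_div_iff₀ (by positivity), le_div_iff₀ (by positivity), h₁, h₂]

theorem MeasureTheory.measurePreserving_curry_symm (ι κ : Type*) {X : Type*} [Fintype ι]
    [Fintype κ] [MeasurableSpace X] (μ : Measure X) [SigmaFinite μ] :
    MeasurePreserving (MeasurableEquiv.curry ι κ X).symm
      (Measure.pi fun _ => Measure.pi fun _ => μ) (Measure.pi fun _ => μ) := by
  refine ⟨(MeasurableEquiv.curry ι κ X).symm.measurable, (Measure.pi_eq fun A _ => ?_).symm⟩
  have hbox : (MeasurableEquiv.curry ι κ X).symm ⁻¹' Set.univ.pi A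
      = Set.univ.pi fun i => Set.univ.pi fun j => A (i, j) := by
    ext
    simp [MeasurableEquiv.coe_curry_symm]
  simp_rw [MeasurableEquiv.map_apply, hbox, Measure.pi_pi, Fintype.prod_prod_type]

lemma symEdge_map {α β : Type*} (W : ℝ → ℝ → ℝ) (g : α → β) (x : β → ℝ) (e : Sym2 α) :
    symEdge W x (e.map g) = symEdge W (x ∘ g) e := by
  induction e using Sym2.ind with
  | _ u v => simp [symEdge]

lemma symEdge_nonneg {α : Type*} {W : ℝ → ℝ → ℝ} (hW : ∀ x y, 0 ≤ W x y) (x : α → ℝ)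
    (e : Sym2 α) : 0 ≤ symEdge W x e := by
  induction e using Sym2.ind with
  | _ u v => exact div_nonneg (add_nonneg (hW _ _) (hW _ _)) zero_le_two

open Classical in
lemma homDensity_nonneg {V : Type*} [Fintype V] (G : SimpleGraph V) {W : ℝ → ℝ → ℝ}
    (hW : ∀ x y, 0 ≤ W x y) : 0 ≤ homDensity G W :=
  integral_nonneg fun x => prod_nonneg fun e _ => symEdge_nonneg hW x e

open Classical in
lemma eCount_eq_card_edgeFinset {V : Type*} [Fintype V] (G : SimpleGraph V) :
    eCount G = #G.edgeFinset := by
  rw [eCount, Set.ncard_eq_toFinset_card']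
  rfl

section unionGraph

variable {V : Type*} [Fintype V] {s : ℕ} (F : Fin s → SimpleGraph V)

open Classical in
lemma edgeFinset_unionGraph :
    (unionGraph F).edgeFinset =
      univ.biUnion fun i => (F i).edgeFinset.image (Sym2.map (·, i)) := by
  ext e
  simp only [mem_biUnion, mem_univ, true_and, mem_image, SimpleGraph.mem_edgeFinset]
  induction e using Sym2.ind with
  | _ a b =>
    obtain ⟨u, i⟩ := a
    obtain ⟨v, j⟩ := b
    constructor
    · rintro ⟨rfl : i = j, hadj⟩
      exact ⟨i, s(u, v), hadj, rfl⟩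
    · rintro ⟨l, e, he, hmap⟩
      induction e using Sym2.ind with
      | _ u' v' =>
        rw [Sym2.map_mk] at hmap
        rcases Sym2.eq_iff.1 hmap with ⟨h₁, h₂⟩ | ⟨h₁, h₂⟩ <;>
          simp only [Prod.mk.injEq] at h₁ h₂ <;>
          obtain ⟨rfl, rfl⟩ := h₁ <;> obtain ⟨rfl, rfl⟩ := h₂
        exacts [⟨rfl, he⟩, ⟨rfl, he.symm⟩]

open Classical in
lemma pairwiseDisjoint_image_map_edgeFinset :
    ((univ : Finset (Fin s)) : Set (Fin s)).PairwiseDisjoint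
      fun i => (F i).edgeFinset.image (Sym2.map (·, i)) := by
  intro i _ j _ hij
  simp only [Function.onFun, disjoint_left, mem_image]
  rintro _ ⟨e, -, rfl⟩ ⟨e', -, he⟩
  induction e using Sym2.ind with
  | _ u v =>
    induction e' using Sym2.ind with
    | _ u' v' =>
      rw [Sym2.map_mk, Sym2.map_mk, Sym2.eq_iff] at he
      rcases he with ⟨h, -⟩ | ⟨h, -⟩ <;> exact hij (congrArg Prod.snd h).symm

open Classical in
lemma prod_edgeFinset_unionGraph {M : Type*} [CommMonoid M] (f : Sym2 (V × Fin s) → M) :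
    ∏ e ∈ (unionGraph F).edgeFinset, f e
      = ∏ i, ∏ e ∈ (F i).edgeFinset, f (e.map (·, i)) := by
  rw [edgeFinset_unionGraph, prod_biUnion (pairwiseDisjoint_image_map_edgeFinset F)]
  exact prod_congr rfl fun i _ => prod_image fun _ _ _ _ h =>
    Sym2.map.injective (Prod.mk_left_injective i) h

lemma eCount_unionGraph : eCount (unionGraph F) = ∑ i, eCount (F i) := by
  classical
  simp only [eCount_eq_card_edgeFinset]
  rw [edgeFinset_unionGraph, card_biUnion (pairwiseDisjoint_image_map_edgeFinset F)]
  exact sum_congr rfl fun i _ =>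
    card_image_of_injective _ (Sym2.map.injective (Prod.mk_left_injective i))

lemma homDensity_unionGraph (W : ℝ → ℝ → ℝ) :
    homDensity (unionGraph F) W = ∏ i, homDensity (F i) W := by
  classical
  -- Fubini, after regrouping the coordinates of `x : V × Fin s → ℝ` by their `Fin s` component.
  have hmp := (measurePreserving_curry_symm (Fin s) V unitM).trans
    (measurePreserving_piCongrLeft (fun _ => unitM) (Equiv.prodComm (Fin s) V))
  unfold homDensity
  rw [← hmp.integral_comp', ← integral_fintype_prod_eq_prod]
  simp only [prod_edgeFinset_unionGraph, symEdge_map]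
  rfl

end unionGraph

theorem common_disjoint_union_general {V₁ V₂ : Type*} [Fintype V₁] [Fintype V₂]
    (s k : ℕ) (hs : 1 ≤ s) (hk : 1 ≤ k)
    (F : Fin s → SimpleGraph V₁) (H : SimpleGraph V₂)
    (hF : ∀ i, eCount (F i) = k)
    (p₁ p₂ : ℝ) (hp₁ : p₁ ∈ Set.Ioo (0:ℝ) 1)
    (hcommon : ∀ i, IsCommonPair (F i) H p₁ p₂) :
    IsCommonPair (unionGraph F) H p₁ p₂ := by
  intro W₁ W₂ hW₁ hW₂ hW
  set c := p₂ / eCount H - homDensity H W₂ / (eCount H * p₂ ^ (eCount H - 1))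
  suffices p₁ / eCount (unionGraph F) + c ≤
      homDensity (unionGraph F) W₁ / (eCount (unionGraph F) * p₁ ^ (eCount (unionGraph F) - 1)) by
    rw [ge_iff_le]; linarith
  have hk₀ : k ≠ 0 := by omega
  have hA : ∀ i, 1 + k * c / p₁ ≤ homDensity (F i) W₁ / p₁ ^ k := fun i => by
    have hi := hcommon i W₁ W₂ hW₁ hW₂ hW
    rw [hF i] at hi
    exact (div_add_le_div_mul_pow_pred_iff hk₀ hp₁.1 _ c).1 (by linarith)
  have hprod := one_add_card_mul_le_prod univ
    (fun i _ => div_nonneg (homDensity_nonneg _ fun x y => (hW₁.2.2 x y).1) (pow_pos hp₁.1 k).le)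
    fun i _ => hA i
  rw [prod_div_distrib, prod_const, card_univ, Fintype.card_fin] at hprod
  rw [eCount_unionGraph, sum_congr rfl fun i _ => hF i, sum_const, card_univ, Fintype.card_fin,
    smul_eq_mul, div_add_le_div_mul_pow_pred_iff (mul_ne_zero (by omega) hk₀) hp₁.1,
    homDensity_unionGraph, pow_mul']
  calc 1 + ↑(s * k) * c / p₁ = 1 + s * (k * c / p₁) := by push_cast; ring
    _ ≤ _ := hprod

/-- If `F₁, …, F_s` are nonempty graphs, all with exactly `k` edges, `H` is a nonempty
graph and `(Fᵢ, H)` is `(p₁,p₂)`-common for each `i`, then the disjoint union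
`(F₁ ⊔ ⋯ ⊔ F_s, H)` is `(p₁,p₂)`-common. -/
theorem common_disjoint_union {V₁ V₂ : Type*} [Fintype V₁] [Fintype V₂]
    (s k : ℕ) (hs : 1 ≤ s) (hk : 1 ≤ k)
    (F : Fin s → SimpleGraph V₁) (H : SimpleGraph V₂)
    (hH : 1 ≤ eCount H) (hF : ∀ i, eCount (F i) = k)
    (p₁ p₂ : ℝ) (hp₁ : p₁ ∈ Set.Ioo (0:ℝ) 1) (hp₂ : p₂ ∈ Set.Ioo (0:ℝ) 1)
    (hsum : p₁ + p₂ = 1)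
    (hcommon : ∀ i, IsCommonPair (F i) H p₁ p₂) :
    IsCommonPair (unionGraph F) H p₁ p₂ :=
  common_disjoint_union_general s k hs hk F H hF p₁ p₂ hp₁ hcommon
end

section
/- If p ∈ (0,1) satisfies 40p⁴ + 32(1-p)p³ - 5 > 0 (in particular for all p > 0.518), then (C₄, C₅) is not (p, 1-p)-common; this is witnessed by the graphon W₁ equal to 1 on [0,1/2]² ∪ (1/2,1]² and 0 elsewhere, with W₂ = 1 - W₁, for which t(C₄,W₁) = 1/8 and t(C₅,W₂) = 0. -/
open MeasureTheory Finset

/-! The witness `W₁` is the two-block graphon `blockGraphon (Set.Iic (1/2))`. For a symmetric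
`0/1`-valued kernel the integrand of a homomorphism density is the indicator of the set of vertex
maps that send every edge into the underlying relation. For `W₁` these are the maps landing on one
side of `1/2`, since `C₄` is connected, so `t(C₄, W₁) = 2 · 2⁻⁴ = 1/8`; for `1 - W₁` they would be
proper 2-colourings of the odd cycle `C₅`, so `t(C₅, 1 - W₁) = 0`. The commonality inequality
then reads `1/(32p³) ≥ p/4 + (1-p)/5`, which contradicts `40p⁴ + 32(1-p)p³ > 5`. -/

namespace SimpleGraph

theorem Preconnected.apply_eq_of_forall_adj {V β : Type*} {G : SimpleGraph V}
    (hG : G.Preconnected) {f : V → β} (hf : ∀ u v, G.Adj u v → f u = f v) (u v : V) :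
    f u = f v := by
  obtain ⟨w⟩ := hG u v
  induction w with
  | nil => rfl
  | cons hadj _ ih => exact (hf _ _ hadj).trans ih

theorem card_edgeFinset_cycleGraph (n : ℕ) : #(cycleGraph (n + 3)).edgeFinset = n + 3 := by
  have := sum_degrees_eq_twice_card_edges (cycleGraph (n + 3))
  simp only [cycleGraph_degree_three_le, sum_const, card_univ, Fintype.card_fin,
    smul_eq_mul] at this
  omega

theorem not_colorable_two_cycleGraph {n : ℕ} (hn : 2 ≤ n) (hOdd : Odd n) :
    ¬(cycleGraph n).Colorable 2 := by
  rw [← chromaticNumber_le_iff_colorable, chromaticNumber_cycleGraph_of_odd n hn hOdd]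
  decide

end SimpleGraph

open SimpleGraph

theorem eCount_cycleGraph (n : ℕ) : eCount (cycleGraph (n + 3)) = n + 3 := by
  rw [eCount, ← coe_edgeFinset, Set.ncard_coe_finset, card_edgeFinset_cycleGraph]

instance inst_s15 : IsProbabilityMeasure unitM := ⟨by simp [unitM]⟩

theorem unitM_real_Iic_half : unitM.real (Set.Iic (1 / 2)) = 1 / 2 := by
  have hinter : Set.Iic (1 / 2 : ℝ) ∩ Set.Icc 0 1 = Set.Icc 0 (1 / 2) := by
    ext t
    simp only [Set.mem_inter_iff, Set.mem_Iic, Set.mem_Icc]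
    exact ⟨fun ⟨h₁, h₂, _⟩ => ⟨h₂, h₁⟩, fun ⟨h₁, h₂⟩ => ⟨h₂, h₁, by linarith⟩⟩
  rw [measureReal_def, unitM, Measure.restrict_apply measurableSet_Iic, hinter, Real.volume_Icc]
  norm_num

theorem measureReal_univ_pi_const {V : Type*} [Fintype V] (S : Set ℝ) :
    (Measure.pi fun _ : V => unitM).real (Set.univ.pi fun _ => S)
      = unitM.real S ^ Fintype.card V := by
  simp [measureReal_def, Measure.pi_pi]

theorem IsSymm2.one_sub {W : ℝ → ℝ → ℝ} (hW : IsSymm2 W) : IsSymm2 fun x y => 1 - W x y :=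
  fun x y => congrArg (1 - ·) (hW x y)

theorem IsGraphon.one_sub {W : ℝ → ℝ → ℝ} (hW : IsGraphon W) :
    IsGraphon fun x y => 1 - W x y := by
  obtain ⟨hmeas, hsymm, hrange⟩ := hW
  refine ⟨measurable_const.sub hmeas, hsymm.one_sub, fun x y => ?_⟩
  obtain ⟨h₀, h₁⟩ := hrange x y
  constructor <;> linarith

theorem symEdge_mk {α : Type*} {W : ℝ → ℝ → ℝ} (hW : IsSymm2 W) (x : α → ℝ) (u v : α) :
    symEdge W x s(u, v) = W (x u) (x v) := by
  simp only [symEdge, Sym2.lift_mk, hW (x v) (x u), add_self_div_two]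

section ZeroOneKernel

variable {V : Type*} (G : SimpleGraph V) {W : ℝ → ℝ → ℝ} {r : ℝ → ℝ → Prop} [DecidableRel r]

theorem prod_symEdge_eq_indicator [Fintype G.edgeSet] (hW : IsSymm2 W)
    (hr : ∀ a b, W a b = if r a b then 1 else 0) (x : V → ℝ) :
    ∏ e ∈ G.edgeFinset, symEdge W x e
      = {x : V → ℝ | ∀ u v, G.Adj u v → r (x u) (x v)}.indicator 1 x := by
  classical
  rw [Set.indicator_apply]
  split_ifs with hx
  · rw [Pi.one_apply]
    refine prod_eq_one fun e he => ?_
    induction e using Sym2.ind with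
    | _ u v => rw [symEdge_mk hW, hr, if_pos (hx u v (mem_edgeFinset.1 he))]
  · simp only [Set.mem_ofPred_eq, not_forall] at hx
    obtain ⟨u, v, huv, hne⟩ := hx
    exact prod_eq_zero (mem_edgeFinset.2 huv) (by rw [symEdge_mk hW, hr, if_neg hne])

theorem homDensity_eq_measureReal [Fintype V] (hW : IsSymm2 W)
    (hr : ∀ a b, W a b = if r a b then 1 else 0)
    (hE : MeasurableSet {x : V → ℝ | ∀ u v, G.Adj u v → r (x u) (x v)}) :
    homDensity G W
      = (Measure.pi fun _ => unitM).real {x : V → ℝ | ∀ u v, G.Adj u v → r (x u) (x v)} := by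
  classical
  simp_rw [homDensity, prod_symEdge_eq_indicator G hW hr]
  exact integral_indicator_one hE

end ZeroOneKernel

open Classical in
noncomputable def blockGraphon (S : Set ℝ) : ℝ → ℝ → ℝ :=
  fun x y => if (x ∈ S ↔ y ∈ S) then 1 else 0

theorem blockGraphon_isSymm2 (S : Set ℝ) : IsSymm2 (blockGraphon S) :=
  fun x y => by unfold blockGraphon; congr 1; exact propext Iff.comm

theorem blockGraphon_isGraphon {S : Set ℝ} (hS : MeasurableSet S) :
    IsGraphon (blockGraphon S) := by
  refine ⟨?_, blockGraphon_isSymm2 S, fun x y => by unfold blockGraphon; split_ifs <;> norm_num⟩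
  exact Measurable.ite ((measurable_fst hS).iff (measurable_snd hS)) measurable_const
    measurable_const

section BlockGraphon

variable {V : Type*} {G : SimpleGraph V}

theorem setOf_forall_adj_iff_eq_union (hG : G.Connected) (S : Set ℝ) :
    {x : V → ℝ | ∀ u v, G.Adj u v → (x u ∈ S ↔ x v ∈ S)}
      = (Set.univ.pi fun _ => S) ∪ Set.univ.pi fun _ => Sᶜ := by
  ext x
  simp only [Set.mem_ofPred_eq, Set.mem_union, Set.mem_univ_pi, Set.mem_compl_iff]
  constructor
  · intro h
    have hconst := hG.preconnected.apply_eq_of_forall_adj (f := fun v => x v ∈ S)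
      fun u v huv => propext (h u v huv)
    obtain ⟨v₀⟩ := hG.nonempty
    by_cases h₀ : x v₀ ∈ S
    · exact Or.inl fun v => hconst v₀ v ▸ h₀
    · exact Or.inr fun v => hconst v₀ v ▸ h₀
  · rintro (h | h) u v _ <;> simp [h u, h v]

theorem setOf_forall_adj_not_iff_eq_empty (hG : ¬G.Colorable 2) (S : Set ℝ) :
    {x : V → ℝ | ∀ u v, G.Adj u v → ¬(x u ∈ S ↔ x v ∈ S)} = ∅ := by
  classical
  refine Set.eq_empty_of_forall_notMem fun x hx => hG ?_
  exact (Coloring.mk (fun v => decide (x v ∈ S))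
    fun {u v} huv heq => hx u v huv (decide_eq_decide.1 heq)).colorable

variable [Fintype V]

theorem homDensity_blockGraphon_of_connected (hG : G.Connected) {S : Set ℝ}
    (hS : MeasurableSet S) :
    homDensity G (blockGraphon S)
      = unitM.real S ^ Fintype.card V + unitM.real Sᶜ ^ Fintype.card V := by
  classical
  obtain ⟨v₀⟩ := hG.nonempty
  have hdisj : Disjoint (Set.univ.pi fun _ : V => S) (Set.univ.pi fun _ => Sᶜ) :=
    Set.disjoint_univ_pi.2 ⟨v₀, disjoint_compl_right⟩
  have hmeas := MeasurableSet.univ_pi fun _ : V => hS.compl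
  rw [homDensity_eq_measureReal G (blockGraphon_isSymm2 S)
      (r := fun a b => a ∈ S ↔ b ∈ S) (fun a b => by simp only [blockGraphon])
      (setOf_forall_adj_iff_eq_union hG S ▸ (MeasurableSet.univ_pi fun _ => hS).union hmeas),
    setOf_forall_adj_iff_eq_union hG S, measureReal_union hdisj hmeas,
    measureReal_univ_pi_const, measureReal_univ_pi_const]

theorem homDensity_one_sub_blockGraphon_of_not_colorable (hG : ¬G.Colorable 2) (S : Set ℝ) :
    homDensity G (fun x y => 1 - blockGraphon S x y) = 0 := by
  classical
  simp_rw [homDensity, prod_symEdge_eq_indicator G (blockGraphon_isSymm2 S).one_sub (r := fun a b => ¬(a ∈ S ↔ b ∈ S))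
    (fun a b => by unfold blockGraphon; split_ifs <;> norm_num),
    setOf_forall_adj_not_iff_eq_empty hG S]
  simp

end BlockGraphon

/-- If `p ∈ (0,1)` satisfies `40p⁴ + 32(1-p)p³ - 5 > 0`, then `(C₄, C₅)` is not
`(p, 1-p)`-common. -/
theorem C4C5_not_common (p : ℝ) (hp : p ∈ Set.Ioo (0:ℝ) 1)
    (h : 40 * p ^ 4 + 32 * (1 - p) * p ^ 3 - 5 > 0) :
    ¬ IsCommonPair (SimpleGraph.cycleGraph 4) (SimpleGraph.cycleGraph 5)
        p (1 - p) := by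
  intro hcommon
  set S : Set ℝ := Set.Iic (1 / 2)
  have hS : MeasurableSet S := measurableSet_Iic
  have hC₄ : homDensity (cycleGraph 4) (blockGraphon S) = 1 / 8 := by
    rw [homDensity_blockGraphon_of_connected cycleGraph_connected hS,
      probReal_compl_eq_one_sub hS, unitM_real_Iic_half]
    norm_num
  have hC₅ : homDensity (cycleGraph 5) (fun x y => 1 - blockGraphon S x y) = 0 :=
    homDensity_one_sub_blockGraphon_of_not_colorable
      (not_colorable_two_cycleGraph (by norm_num) (by decide)) S
  have key := hcommon _ _ (blockGraphon_isGraphon hS) (blockGraphon_isGraphon hS).one_sub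
    fun x y => add_sub_cancel _ _
  rw [hC₄, hC₅, eCount_cycleGraph 1, eCount_cycleGraph 2] at key
  norm_num at key
  have hp₀ := hp.1
  field_simp at key
  nlinarith
end
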